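/- arXiv:2109.08552 — 8 statements merged into one kernel-verified Lean document; each statement's English description precedes it below -/
import Mathlib

section
/- Let a, b : ℕ → ℝ (indexed from 1) be strictly increasing sequences of positive real numbers tending to +∞, each of which is linearly independent over ℚ in the ℚ-vector space ℝ. Let x : ℕ → ℝ be the strictly increasing enumeration of the set S_a = { ∑ i, (m i) • (a i) : m : ℕ →₀ ℕ } and y the strictly increasing enumeration of the analogous set S_b. Then (for all i, j, k: x i + x j = x k if and only if y i + y j = y k) holds if and only if there exists λ > 0 such that a k = λ * b k for all k. -/
open Filter

/-- The finite ℕ-linear combination `∑ i, (m i) • (a i)`. -/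
noncomputable def comb (a : ℕ → ℝ) (m : ℕ →₀ ℕ) : ℝ :=
  m.sum fun i c => (c : ℝ) * a i

/-- The set `S_a` of all finite ℕ-linear combinations of the family `a`. -/
def combSet (a : ℕ → ℝ) : Set ℝ :=
  {t : ℝ | ∃ m : ℕ →₀ ℕ, t = comb a m}

lemma strictMono_eq_of_range_eq {f g : ℕ → ℝ} (hf : StrictMono f) (hg : StrictMono g)
    (h : Set.range f = Set.range g) : ∀ n, f n = g n := by
  intro n
  induction n using Nat.strong_induction_on with
  | _ n ih =>
    have h1 : f n ∈ Set.range g := h ▸ Set.mem_range_self n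
    have h2 : g n ∈ Set.range f := h ▸ Set.mem_range_self n
    obtain ⟨m, hm⟩ := h1
    obtain ⟨m', hm'⟩ := h2
    have hle1 : g n ≤ f n := by
      rcases lt_or_ge m n with hmn | hmn
      · exfalso
        have := ih m hmn
        rw [← this] at hm
        exact absurd hm (ne_of_lt (hf hmn))
      · calc g n ≤ g m := hg.monotone hmn
          _ = f n := hm
    have hle2 : f n ≤ g n := by
      rcases lt_or_ge m' n with hmn | hmn
      · exfalso
        have := ih m' hmn
        rw [this] at hm'
        exact absurd hm' (ne_of_lt (hg hmn))
      · calc f n ≤ f m' := hf.monotone hmn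
          _ = g n := hm'
    linarith

lemma comb_eq_lc (a : ℕ → ℝ) (m : ℕ →₀ ℕ) :
    comb a m = Finsupp.linearCombination ℚ a (m.mapRange (Nat.cast) Nat.cast_zero) := by
  rw [Finsupp.linearCombination_apply, Finsupp.sum_mapRange_index (by simp)]
  simp [comb, Rat.smul_def]

lemma comb_injective {a : ℕ → ℝ} (ha_li : LinearIndependent ℚ a) :
    Function.Injective (comb a) := by
  intro m m' h
  rw [comb_eq_lc, comb_eq_lc] at h
  have := ha_li h
  exact Finsupp.mapRange_injective _ _ Nat.cast_injective this

lemma comb_zero (a : ℕ → ℝ) : comb a 0 = 0 := Finsupp.sum_zero_index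

lemma comb_add (a : ℕ → ℝ) (m m' : ℕ →₀ ℕ) :
    comb a (m + m') = comb a m + comb a m' :=
  Finsupp.sum_add_index' (by simp) (by intro i b₁ b₂; push_cast; ring)

lemma comb_single (a : ℕ → ℝ) (k : ℕ) : comb a (Finsupp.single k 1) = a k := by
  rw [comb, Finsupp.sum_single_index (by simp)]; simp

lemma comb_nonneg {a : ℕ → ℝ} (ha_pos : ∀ i, 0 < a i) (m : ℕ →₀ ℕ) : 0 ≤ comb a m := by
  rw [comb, Finsupp.sum]
  exact Finset.sum_nonneg fun i _ => mul_nonneg (Nat.cast_nonneg _) (ha_pos i).le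

lemma comb_pos {a : ℕ → ℝ} (ha_pos : ∀ i, 0 < a i) {m : ℕ →₀ ℕ} (hm : m ≠ 0) :
    0 < comb a m := by
  rw [comb, Finsupp.sum]
  apply Finset.sum_pos
  · intro i hi
    have h1 : m i ≠ 0 := Finsupp.mem_support_iff.mp hi
    exact mul_pos (by exact_mod_cast Nat.pos_of_ne_zero h1) (ha_pos i)
  · exact Finsupp.support_nonempty_iff.mpr hm

lemma no_split {a : ℕ → ℝ} (ha_pos : ∀ i, 0 < a i) (ha_li : LinearIndependent ℚ a)
    (k : ℕ) {u v : ℝ} (hu : u ∈ combSet a) (hv : v ∈ combSet a)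
    (hu0 : 0 < u) (hv0 : 0 < v) : u + v ≠ a k := by
  intro h
  obtain ⟨m, rfl⟩ := hu
  obtain ⟨m', rfl⟩ := hv
  have hm : m ≠ 0 := by rintro rfl; rw [comb_zero] at hu0; exact lt_irrefl _ hu0
  have hm' : m' ≠ 0 := by rintro rfl; rw [comb_zero] at hv0; exact lt_irrefl _ hv0
  have heq : comb a (m + m') = comb a (Finsupp.single k 1) := by
    rw [comb_add, comb_single]; exact h
  have hmm := comb_injective ha_li heq
  obtain ⟨i, hi⟩ := Finsupp.support_nonempty_iff.mpr hm
  obtain ⟨j, hj⟩ := Finsupp.support_nonempty_iff.mpr hm'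
  have hi' : m i ≠ 0 := Finsupp.mem_support_iff.mp hi
  have hj' : m' j ≠ 0 := Finsupp.mem_support_iff.mp hj
  have e1 : m i + m' i = (Finsupp.single k 1 : ℕ →₀ ℕ) i := by
    rw [← hmm]; simp
  have e2 : m j + m' j = (Finsupp.single k 1 : ℕ →₀ ℕ) j := by
    rw [← hmm]; simp
  rw [Finsupp.single_apply] at e1 e2
  have hik : k = i := by by_contra hne; rw [if_neg hne] at e1; omega
  have hjk : k = j := by by_contra hne; rw [if_neg hne] at e2; omega
  have hij : i = j := hik.symm.trans hjk
  rw [if_pos hik] at e1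
  rw [← hij] at hj'
  omega

lemma atom_is_gen {a : ℕ → ℝ} (ha_pos : ∀ i, 0 < a i) {t : ℝ}
    (ht : t ∈ combSet a) (ht0 : 0 < t)
    (hatom : ∀ u v : ℝ, u ∈ combSet a → v ∈ combSet a → 0 < u → 0 < v → u + v ≠ t) :
    ∃ k, t = a k := by
  obtain ⟨m, rfl⟩ := ht
  have hm : m ≠ 0 := by rintro rfl; rw [comb_zero] at ht0; exact lt_irrefl _ ht0
  obtain ⟨i, hi⟩ := Finsupp.support_nonempty_iff.mpr hm
  have hi' : m i ≠ 0 := Finsupp.mem_support_iff.mp hi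
  set m' := m - Finsupp.single i 1 with hm'def
  have hsum : Finsupp.single i 1 + m' = m := by
    ext j
    simp only [Finsupp.add_apply, Finsupp.tsub_apply, Finsupp.single_apply, hm'def]
    rcases eq_or_ne i j with rfl | hij
    · simp; omega
    · simp [hij]
  by_cases h0 : m' = 0
  · refine ⟨i, ?_⟩
    rw [← hsum, h0, add_zero, comb_single]
  · exfalso
    exact hatom (a i) (comb a m')
      ⟨Finsupp.single i 1, (comb_single a i).symm⟩ ⟨m', rfl⟩
      (ha_pos i) (comb_pos ha_pos h0)
      (by rw [← comb_single a i, ← comb_add, hsum])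

lemma ratio_le {p q r s : ℝ} (hp : 0 < p) (hr : 0 < r) (hs : 0 < s)
    (h : ∀ n m : ℕ, (n:ℝ) * p ≤ (m:ℝ) * q → (n:ℝ) * r ≤ (m:ℝ) * s) : q / p ≤ s / r := by
  by_contra hlt
  push_neg at hlt
  obtain ⟨ξ, h1, h2⟩ := exists_rat_btwn hlt
  have hξpos : 0 < ξ := by
    have : (0:ℝ) < ξ := lt_trans (div_pos hs hr) h1
    exact_mod_cast this
  set n := ξ.num.toNat with hn
  set m := ξ.den with hm
  have hmpos : 0 < (m:ℝ) := by exact_mod_cast ξ.pos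
  have hnm : (n:ℝ) / (m:ℝ) = (ξ:ℝ) := by
    have hnum : (0:ℤ) ≤ ξ.num := (Rat.num_pos.mpr hξpos).le
    rw [Rat.cast_def, hn, hm]
    have hc : ((ξ.num.toNat : ℕ) : ℝ) = (ξ.num : ℝ) := by
      exact_mod_cast congrArg (Int.cast : ℤ → ℝ) (Int.toNat_of_nonneg hnum)
    rw [hc]
  have h3 : (n:ℝ) * p ≤ (m:ℝ) * q := by
    have h2' : (n:ℝ) / m < q / p := by rw [hnm]; exact h2
    have := (div_lt_div_iff₀ hmpos hp).mp h2'
    linarith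
  have h4 := h n m h3
  have h5 : (n:ℝ) / m ≤ s / r := (div_le_div_iff₀ hmpos hr).mpr (by linarith)
  rw [hnm] at h5
  linarith

/-- Two likens generated by sequences `a` and `b` are isomorphic iff the
sequences of generators are homothetic. -/
theorem likens_isomorphic_iff_homothetic (a b x y : ℕ → ℝ)
    (ha_pos : ∀ i, 0 < a i) (ha_mono : StrictMono a)
    (ha_tend : Tendsto a atTop atTop) (ha_li : LinearIndependent ℚ a)
    (hb_pos : ∀ i, 0 < b i) (hb_mono : StrictMono b)
    (hb_tend : Tendsto b atTop atTop) (hb_li : LinearIndependent ℚ b)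
    (hx_mono : StrictMono x) (hx_range : Set.range x = combSet a)
    (hy_mono : StrictMono y) (hy_range : Set.range y = combSet b) :
    (∀ i j k : ℕ, x i + x j = x k ↔ y i + y j = y k) ↔
      ∃ lam : ℝ, 0 < lam ∧ ∀ k : ℕ, a k = lam * b k := by
  have hx_mem : ∀ n, x n ∈ combSet a := fun n => by
    rw [← hx_range]; exact Set.mem_range_self n
  have hy_mem : ∀ n, y n ∈ combSet b := fun n => by
    rw [← hy_range]; exact Set.mem_range_self n
  have hx0 : x 0 = 0 := by
    have h0mem : (0:ℝ) ∈ Set.range x := by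
      rw [hx_range]; exact ⟨0, (comb_zero a).symm⟩
    obtain ⟨n, hn⟩ := h0mem
    have h1 : x 0 ≤ 0 := hn ▸ hx_mono.monotone (Nat.zero_le n)
    obtain ⟨m, hm⟩ := hx_mem 0
    have h2 : 0 ≤ x 0 := hm ▸ comb_nonneg ha_pos m
    linarith
  have hy0 : y 0 = 0 := by
    have h0mem : (0:ℝ) ∈ Set.range y := by
      rw [hy_range]; exact ⟨0, (comb_zero b).symm⟩
    obtain ⟨n, hn⟩ := h0mem
    have h1 : y 0 ≤ 0 := hn ▸ hy_mono.monotone (Nat.zero_le n)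
    obtain ⟨m, hm⟩ := hy_mem 0
    have h2 : 0 ≤ y 0 := hm ▸ comb_nonneg hb_pos m
    linarith
  have hx1 : 0 < x 1 := hx0 ▸ hx_mono Nat.zero_lt_one
  have hy1 : 0 < y 1 := hy0 ▸ hy_mono Nat.zero_lt_one
  constructor
  · -- forward direction
    intro H
    have hclose : ∀ i j, ∃ k, x i + x j = x k := by
      intro i j
      obtain ⟨m, hm⟩ := hx_mem i
      obtain ⟨m', hm'⟩ := hx_mem j
      have : x i + x j ∈ Set.range x := by
        rw [hx_range]
        exact ⟨m + m', by rw [comb_add, hm, hm']⟩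
      obtain ⟨k, hk⟩ := this
      exact ⟨k, hk.symm⟩
    have hmul : ∀ (N : ℕ) (i : ℕ), ∃ k, (N:ℝ) * x i = x k ∧ (N:ℝ) * y i = y k := by
      intro N i
      induction N with
      | zero => exact ⟨0, by simp [hx0], by simp [hy0]⟩
      | succ N ihN =>
        obtain ⟨k, hk1, hk2⟩ := ihN
        obtain ⟨k', hk'⟩ := hclose k i
        have hk'2 : y k + y i = y k' := (H k i k').mp hk'
        refine ⟨k', ?_, ?_⟩
        · push_cast; rw [add_mul, one_mul, hk1]; exact hk'
        · push_cast; rw [add_mul, one_mul, hk2]; exact hk'2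
    set lam' := y 1 / x 1 with hlam'
    have hlam'pos : 0 < lam' := div_pos hy1 hx1
    have hmain : ∀ n, y n = lam' * x n := by
      intro n
      rcases Nat.eq_zero_or_pos n with rfl | hn
      · simp [hx0, hy0]
      · have hxn : 0 < x n := hx0 ▸ hx_mono hn
        have hyn : 0 < y n := hy0 ▸ hy_mono hn
        have hiff : ∀ N M : ℕ, (N:ℝ) * x 1 ≤ (M:ℝ) * x n ↔ (N:ℝ) * y 1 ≤ (M:ℝ) * y n := by
          intro N M
          obtain ⟨k, hk1, hk2⟩ := hmul N 1
          obtain ⟨l, hl1, hl2⟩ := hmul M n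
          rw [hk1, hl1, hk2, hl2, hx_mono.le_iff_le, hy_mono.le_iff_le]
        have e1 : x n / x 1 ≤ y n / y 1 :=
          ratio_le hx1 hy1 hyn (fun N M h => (hiff N M).mp h)
        have e2 : y n / y 1 ≤ x n / x 1 :=
          ratio_le hy1 hx1 hxn (fun N M h => (hiff N M).mpr h)
        have heq : x n / x 1 = y n / y 1 := le_antisymm e1 e2
        rw [hlam']
        field_simp at heq ⊢
        linarith
    -- transfer atoms
    have key : ∀ k, lam' * a k = b k := by
      have hrange : Set.range (fun k => lam' * a k) = Set.range b := by
        apply Set.Subset.antisymm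
        · rintro _ ⟨k, rfl⟩
          have hak : a k ∈ Set.range x := by
            rw [hx_range]; exact ⟨Finsupp.single k 1, (comb_single a k).symm⟩
          obtain ⟨i, hi⟩ := hak
          have hmem : lam' * a k ∈ combSet b := by
            rw [← hy_range]
            exact ⟨i, by rw [hmain i, hi]⟩
          have hpos : 0 < lam' * a k := mul_pos hlam'pos (ha_pos k)
          have hatom : ∀ u v : ℝ, u ∈ combSet b → v ∈ combSet b → 0 < u → 0 < v →
              u + v ≠ lam' * a k := by
            intro u v hu hv hu0 hv0 heq
            rw [← hy_range] at hu hv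
            obtain ⟨p, rfl⟩ := hu
            obtain ⟨q, rfl⟩ := hv
            rw [hmain p] at heq hu0
            rw [hmain q] at heq hv0
            have hxp : 0 < x p := by
              by_contra hc; push_neg at hc; nlinarith
            have hxq : 0 < x q := by
              by_contra hc; push_neg at hc; nlinarith
            have heq' : x p + x q = a k := by
              have : lam' * (x p + x q) = lam' * a k := by ring_nf; ring_nf at heq; linarith
              exact mul_left_cancel₀ (ne_of_gt hlam'pos) this
            exact no_split ha_pos ha_li k (hx_range ▸ Set.mem_range_self p)
              (hx_range ▸ Set.mem_range_self q) hxp hxq heq'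
          obtain ⟨k', hk'⟩ := atom_is_gen hb_pos hmem hpos hatom
          exact ⟨k', hk'.symm⟩
        · rintro _ ⟨k, rfl⟩
          have hbk : b k ∈ Set.range y := by
            rw [hy_range]; exact ⟨Finsupp.single k 1, (comb_single b k).symm⟩
          obtain ⟨i, hi⟩ := hbk
          have hxi : 0 < x i := by
            have h1 : 0 < y i := hi ▸ hb_pos k
            rw [hmain i] at h1
            by_contra hc; push_neg at hc; nlinarith
          have hatom : ∀ u v : ℝ, u ∈ combSet a → v ∈ combSet a → 0 < u → 0 < v →
              u + v ≠ x i := by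
            intro u v hu hv hu0 hv0 heq
            rw [← hx_range] at hu hv
            obtain ⟨p, rfl⟩ := hu
            obtain ⟨q, rfl⟩ := hv
            have heqy : y p + y q = y i := (H p q i).mp heq
            rw [hmain p, hmain q, hmain i] at heqy
            have hyp : 0 < lam' * x p := mul_pos hlam'pos hu0
            have hyq : 0 < lam' * x q := mul_pos hlam'pos hv0
            exact no_split hb_pos hb_li k
              (by rw [← hy_range, ← hmain p]; exact Set.mem_range_self p)
              (by rw [← hy_range, ← hmain q]; exact Set.mem_range_self q)
              hyp hyq (by rw [heqy, ← hmain i, hi])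
          obtain ⟨k', hk'⟩ := atom_is_gen ha_pos (hx_mem i) hxi hatom
          exact ⟨k', by show lam' * a k' = b k; rw [← hk', ← hmain i]; exact hi⟩
      exact strictMono_eq_of_range_eq
        (fun n n' h => (mul_lt_mul_iff_right₀ hlam'pos).mpr (ha_mono h)) hb_mono hrange
    refine ⟨x 1 / y 1, div_pos hx1 hy1, fun k => ?_⟩
    have := key k
    rw [hlam'] at this
    field_simp at this ⊢
    linarith
  · -- backward direction
    rintro ⟨lam, hlam, hab⟩
    have hcomb : ∀ m, comb a m = lam * comb b m := by
      intro m
      rw [comb, comb, Finsupp.sum, Finsupp.sum, Finset.mul_sum]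
      apply Finset.sum_congr rfl
      intro i _
      rw [hab i]; ring
    have hrange : Set.range x = Set.range (fun n => lam * y n) := by
      rw [hx_range]
      apply Set.Subset.antisymm
      · rintro t ⟨m, rfl⟩
        have : comb b m ∈ Set.range y := by
          rw [hy_range]; exact ⟨m, rfl⟩
        obtain ⟨n, hn⟩ := this
        exact ⟨n, by show lam * y n = comb a m; rw [hn, hcomb]⟩
      · rintro _ ⟨n, rfl⟩
        obtain ⟨m, hm⟩ := hy_mem n
        exact ⟨m, by show lam * y n = comb a m; rw [hcomb, hm]⟩
    have hxy : ∀ n, x n = lam * y n :=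
      strictMono_eq_of_range_eq hx_mono
        (fun n n' h => (mul_lt_mul_iff_right₀ hlam).mpr (hy_mono h)) hrange
    intro i j k
    rw [hxy i, hxy j, hxy k]
    constructor
    · intro h
      apply mul_left_cancel₀ (ne_of_gt hlam)
      rw [mul_add]; exact h
    · intro h
      rw [← mul_add, h]
end

section
/- Let x : ℕ → ℝ be a liken. Then for every n there exists a finite multiset S of real numbers, each of which is an undecomposable element of x, such that x n equals the sum of the elements of S (for n = 0 the empty multiset). -/
/-- A liken: a sequence of reals starting at 0, strictly increasing,
and closed under addition. -/
def IsLiken (x : ℕ → ℝ) : Prop :=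
  x 0 = 0 ∧ StrictMono x ∧ ∀ n m : ℕ, ∃ k : ℕ, x n + x m = x k

/-- An element `u` of the range of `x` is undecomposable if whenever
`u = v + w` with `v, w` in the range of `x`, then `v = 0` or `w = 0`. -/
def Undecomposable (x : ℕ → ℝ) (u : ℝ) : Prop :=
  u ∈ Set.range x ∧
    ∀ v w : ℝ, v ∈ Set.range x → w ∈ Set.range x → u = v + w → v = 0 ∨ w = 0

/-- Every element of a liken is a finite sum of undecomposable elements. -/
theorem liken_decomposition (x : ℕ → ℝ) (hx : IsLiken x) (n : ℕ) :
    ∃ S : Multiset ℝ, (∀ u ∈ S, Undecomposable x u) ∧ x n = S.sum := by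
  obtain ⟨h0, hmono, hclosed⟩ := hx
  induction n using Nat.strong_induction_on with
  | _ n ih =>
    rcases Nat.eq_zero_or_pos n with rfl | hn
    · exact ⟨0, by simp, by simp [h0]⟩
    by_cases hu : Undecomposable x (x n)
    · exact ⟨{x n}, by simpa using hu, by simp⟩
    · have : ∃ v w : ℝ, v ∈ Set.range x ∧ w ∈ Set.range x ∧
          x n = v + w ∧ v ≠ 0 ∧ w ≠ 0 := by
        unfold Undecomposable at hu
        push_neg at hu
        obtain ⟨v, w, hv, hw, heq, hvne, hwne⟩ := hu ⟨n, rfl⟩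
        exact ⟨v, w, hv, hw, heq, hvne, hwne⟩
      obtain ⟨v, w, ⟨a, rfl⟩, ⟨b, rfl⟩, heq, hvne, hwne⟩ := this
      have ha0 : a ≠ 0 := by rintro rfl; exact hvne h0
      have hb0 : b ≠ 0 := by rintro rfl; exact hwne h0
      have hva : 0 < x a := by
        have := hmono (Nat.pos_of_ne_zero ha0); rwa [h0] at this
      have hvb : 0 < x b := by
        have := hmono (Nat.pos_of_ne_zero hb0); rwa [h0] at this
      have han : a < n := hmono.lt_iff_lt.mp (by linarith)
      have hbn : b < n := hmono.lt_iff_lt.mp (by linarith)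
      obtain ⟨S1, hS1, hsum1⟩ := ih a han
      obtain ⟨S2, hS2, hsum2⟩ := ih b hbn
      refine ⟨S1 + S2, ?_, by simp [heq, hsum1, hsum2]⟩
      intro u hu
      rcases Multiset.mem_add.mp hu with h | h
      · exact hS1 u h
      · exact hS2 u h
end

section
/- Let a : ℕ → ℝ (indexed from 1) be a sequence with a i > 0 for all i, linearly independent over ℚ in the ℚ-vector space ℝ, and tending to +∞. Let S_a = { ∑ i, (m i) • (a i) : m : ℕ →₀ ℕ }. Then S_a contains 0, is closed under addition, and S_a ∩ [0, T] is finite for every real T; consequently there exists a liken x : ℕ → ℝ (strictly increasing, x 0 = 0, closed under addition) whose range is exactly S_a. -/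
open Filter

/-- The least element of `S` greater than `t`. -/
noncomputable def nextEl (S : Set ℝ) (t : ℝ) : ℝ := sInf (S ∩ Set.Ioi t)

/-- The increasing enumeration of `S`, starting at `0`. -/
noncomputable def seqOf (S : Set ℝ) : ℕ → ℝ
  | 0 => 0
  | n + 1 => nextEl S (seqOf S n)

theorem combSet_isLiken (a : ℕ → ℝ)
    (hpos : ∀ i, 0 < a i)
    (hli : LinearIndependent ℚ a)
    (htend : Tendsto a atTop atTop) :
    (0 : ℝ) ∈ combSet a ∧
    (∀ u ∈ combSet a, ∀ v ∈ combSet a, u + v ∈ combSet a) ∧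
    (∀ T : ℝ, (combSet a ∩ Set.Icc 0 T).Finite) ∧
    ∃ x : ℕ → ℝ, IsLiken x ∧ Set.range x = combSet a := by
  clear hli
  set S := combSet a with hS
  -- 0 ∈ S
  have h0 : (0 : ℝ) ∈ S := ⟨0, by simp [comb]⟩
  -- closure under addition
  have hadd : ∀ u ∈ S, ∀ v ∈ S, u + v ∈ S := by
    rintro u ⟨m₁, rfl⟩ v ⟨m₂, rfl⟩
    refine ⟨m₁ + m₂, ?_⟩
    simp only [comb]
    rw [Finsupp.sum_add_index' (fun i => by simp) (fun i c₁ c₂ => by push_cast; ring)]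
  -- every element of S is nonnegative
  have hnn : ∀ s ∈ S, (0 : ℝ) ≤ s := by
    rintro s ⟨m, rfl⟩
    exact Finset.sum_nonneg fun i _ => mul_nonneg (Nat.cast_nonneg _) (hpos i).le
  -- a 0 ∈ S
  have ha0 : a 0 ∈ S := by
    refine ⟨Finsupp.single 0 1, ?_⟩
    simp [comb, Finsupp.sum_single_index]
  -- intersection with [0, T] is finite
  have hfin : ∀ T : ℝ, (S ∩ Set.Icc 0 T).Finite := by
    intro T
    obtain ⟨N, hN⟩ := (htend.eventually (eventually_gt_atTop T)).exists_forall_of_atTop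
    -- bound for coefficients
    set B : ℕ := (Finset.range N).sup fun i => ⌈T / a i⌉₊ with hB
    -- key pointwise bound
    have key : ∀ m : ℕ →₀ ℕ, comb a m ≤ T → ∀ i, (m i : ℝ) * a i ≤ T := by
      intro m hm i
      by_cases hi : i ∈ m.support
      · refine le_trans ?_ hm
        exact Finset.single_le_sum
          (fun j _ => mul_nonneg (Nat.cast_nonneg _) (hpos j).le) hi
      · simp only [Finsupp.notMem_support_iff] at hi
        simp only [hi, Nat.cast_zero, zero_mul]
        exact le_trans (hnn _ ⟨m, rfl⟩) hm
    have hsupp : ∀ m : ℕ →₀ ℕ, comb a m ≤ T → ∀ i, N ≤ i → m i = 0 := by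
      intro m hm i hi
      by_contra hmi
      have h1 : (1 : ℝ) ≤ (m i : ℝ) := by exact_mod_cast Nat.one_le_iff_ne_zero.mpr hmi
      have := key m hm i
      have : a i ≤ T := by nlinarith [(hpos i).le, hN i hi]
      exact absurd this (not_le.mpr (hN i hi))
    have hcoef : ∀ m : ℕ →₀ ℕ, comb a m ≤ T → ∀ i, m i ≤ B := by
      intro m hm i
      rcases lt_or_ge i N with hiN | hiN
      · have h1 : (m i : ℝ) * a i ≤ T := key m hm i
        have h2 : (m i : ℝ) ≤ T / a i := (le_div_iff₀ (hpos i)).mpr h1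
        have h3 : m i ≤ ⌈T / a i⌉₊ := by
          exact_mod_cast h2.trans (Nat.le_ceil _)
        have h4 := Finset.le_sup (f := fun j => ⌈T / a j⌉₊) (Finset.mem_range.mpr hiN)
        exact h3.trans h4
      · simp [hsupp m hm i hiN]
    -- injection into a finite type
    have : Finite ↥(S ∩ Set.Icc 0 T) := by
      set V := S ∩ Set.Icc 0 T
      have hchoice : ∀ t : V, ∃ m : ℕ →₀ ℕ, (t : ℝ) = comb a m := fun t => t.2.1
      choose m hm using hchoice
      have hle : ∀ t : V, comb a (m t) ≤ T := fun t => (hm t) ▸ t.2.2.2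
      refine Finite.of_injective (fun t : V => fun i : Fin N => (⟨m t i, ?_⟩ : Fin (B + 1))) ?_
      · exact Nat.lt_succ_of_le (hcoef (m t) (hle t) i)
      · intro t₁ t₂ h
        have hmm : m t₁ = m t₂ := by
          ext i
          rcases lt_or_ge i N with hiN | hiN
          · exact congrArg Fin.val (congrFun h ⟨i, hiN⟩)
          · rw [hsupp (m t₁) (hle t₁) i hiN, hsupp (m t₂) (hle t₂) i hiN]
        have : (t₁ : ℝ) = (t₂ : ℝ) := by rw [hm t₁, hm t₂, hmm]
        exact Subtype.ext this
    exact Set.toFinite _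
  refine ⟨h0, hadd, hfin, ?_⟩
  -- the enumeration
  set x : ℕ → ℝ := seqOf S with hx
  -- key step lemma
  have hstep : ∀ t ∈ S, nextEl S t ∈ S ∧ t < nextEl S t ∧
      ∀ z ∈ S, t < z → nextEl S t ≤ z := by
    intro t ht
    have hta : t + a 0 ∈ S := hadd t ht (a 0) ha0
    set G := S ∩ Set.Ioc t (t + a 0) with hG
    have hGfin : G.Finite := by
      apply (hfin (t + a 0)).subset
      rintro z ⟨hz1, hz2⟩
      exact ⟨hz1, hnn z hz1, hz2.2⟩
    have hGne : G.Nonempty := ⟨t + a 0, hta, by simp [hpos 0], le_rfl⟩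
    obtain ⟨y, hyG, hymin⟩ := Set.Finite.exists_minimalFor id G hGfin hGne
    have hylb : ∀ z ∈ S ∩ Set.Ioi t, y ≤ z := by
      rintro z ⟨hz1, hz2⟩
      rcases le_or_gt z (t + a 0) with hc | hc
      · have hzG : z ∈ G := ⟨hz1, hz2, hc⟩
        by_contra hzy
        have he := hymin (j := z) hzG (le_of_not_ge hzy)
        simp only [id] at he
        exact hzy he
      · exact le_trans hyG.2.2 hc.le
    have hyIoi : y ∈ S ∩ Set.Ioi t := ⟨hyG.1, hyG.2.1⟩
    have hInf : nextEl S t = y := by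
      apply le_antisymm
      · exact csInf_le ⟨y, hylb⟩ hyIoi
      · exact le_csInf ⟨y, hyIoi⟩ hylb
    rw [hInf]
    exact ⟨hyIoi.1, hyIoi.2, fun z hz1 hz2 => hylb z ⟨hz1, hz2⟩⟩
  have hx0 : x 0 = 0 := rfl
  have hxS : ∀ n, x n ∈ S := by
    intro n
    induction n with
    | zero => exact h0
    | succ n ih => exact (hstep (x n) ih).1
  have hlt : ∀ n, x n < x (n + 1) := fun n => (hstep (x n) (hxS n)).2.1
  have hmono : StrictMono x := strictMono_nat_of_lt_succ hlt
  -- every element of S below x n is in the range of x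
  have hbelow : ∀ n, ∀ s ∈ S, s ≤ x n → s ∈ Set.range x := by
    intro n
    induction n with
    | zero =>
      intro s hs hle
      have : s = 0 := le_antisymm hle (hnn s hs)
      exact ⟨0, this.symm⟩
    | succ n ih =>
      intro s hs hle
      rcases le_or_gt s (x n) with h | h
      · exact ih s hs h
      · have h1 : x (n + 1) ≤ s := (hstep (x n) (hxS n)).2.2 s hs h
        exact ⟨n + 1, le_antisymm h1 hle⟩
  -- x is unbounded
  have hunb : ∀ s : ℝ, ∃ n, s ≤ x n := by
    intro s
    by_contra hc
    push_neg at hc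
    have hsub : Set.range x ⊆ S ∩ Set.Icc 0 s := by
      rintro z ⟨n, rfl⟩
      exact ⟨hxS n, hnn _ (hxS n), (hc n).le⟩
    exact (Set.infinite_range_of_injective hmono.injective)
      ((hfin s).subset hsub)
  have hrange : Set.range x = S := by
    apply Set.Subset.antisymm
    · rintro z ⟨n, rfl⟩; exact hxS n
    · intro s hs
      obtain ⟨n, hn⟩ := hunb s
      exact hbelow n s hs hn
  refine ⟨x, ⟨hx0, hmono, ?_⟩, hrange⟩
  intro n m
  have : x n + x m ∈ S := hadd _ (hxS n) _ (hxS m)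
  rw [← hrange] at this
  obtain ⟨k, hk⟩ := this
  exact ⟨k, hk.symm⟩
end

section
/- Let x : ℕ → ℝ be a liken possessing two undecomposable elements u and v such that u / v is irrational. Then the sequence of gaps δ k = x (k+1) - x k tends to 0 as k → ∞. -/
open Filter

/-- Covering lemma: if an additive submonoid of ℝ contains `t ≥ 0` and `t + d`
with `d > 0`, then every sufficiently large interval of length `d` contains
an element of the submonoid. -/
lemma covering (M : AddSubmonoid ℝ) (t d : ℝ) (ht : t ∈ M) (hs : t + d ∈ M)
    (ht0 : 0 ≤ t) (hd : 0 < d) (r : ℝ) (hr : t * t / d + t ≤ r) :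
    ∃ w ∈ M, r < w ∧ w ≤ r + d := by
  rcases eq_or_lt_of_le ht0 with h0 | htpos
  · -- t = 0, use multiples of d
    have hr0 : 0 ≤ r := le_trans (by rw [← h0]; positivity) hr
    refine ⟨(⌊r / d⌋₊ + 1) • (t + d), M.nsmul_mem hs _, ?_, ?_⟩
    · have := Nat.lt_floor_add_one (r / d)
      rw [nsmul_eq_mul, ← h0, zero_add]
      push_cast
      rw [div_lt_iff₀ hd] at this
      linarith
    · have h' : (0:ℝ) ≤ r / d := div_nonneg hr0 hd.le
      have := Nat.floor_le h'
      rw [nsmul_eq_mul, ← h0, zero_add]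
      push_cast
      rw [le_div_iff₀ hd] at this
      linarith
  · set m : ℕ := ⌊(r + d) / t⌋₊ with hm
    have hrpos : 0 < r := lt_of_lt_of_le (by positivity) hr
    have hm1 : (m : ℝ) * t ≤ r + d := by
      have h' : (0:ℝ) ≤ (r + d) / t := div_nonneg (by linarith) htpos.le
      have := Nat.floor_le h'
      rw [le_div_iff₀ htpos] at this
      exact this
    have hm2 : r + d < ((m : ℝ) + 1) * t := by
      have := Nat.lt_floor_add_one ((r + d) / t)
      rw [div_lt_iff₀ htpos] at this
      push_cast
      exact this
    have hmd : t < (m : ℝ) * d := by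
      have h1 : t / d + d / t + 1 ≤ (r + d) / t := by
        rw [le_div_iff₀ htpos]
        have : (t / d + d / t + 1) * t = t * t / d + d + t := by
          field_simp
        rw [this]; linarith
      have h2 : (r + d) / t < (m : ℝ) + 1 := by
        rw [div_lt_iff₀ htpos]; linarith
      have h3 : t / d + d / t < (m : ℝ) + 0 := by
        have := div_pos hd htpos
        linarith
      have h4 : t / d < (m : ℝ) := by
        have := div_pos hd htpos
        linarith
      rw [div_lt_iff₀ hd] at h4
      linarith
    rcases lt_or_ge r ((m : ℝ) * t) with hcase | hcase
    · refine ⟨m • t, M.nsmul_mem ht _, ?_, ?_⟩ <;> rw [nsmul_eq_mul]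
      · exact hcase
      · exact hm1
    · set j : ℕ := ⌊(r - (m : ℝ) * t) / d⌋₊ + 1 with hj
      have hj1 : r - (m : ℝ) * t < (j : ℝ) * d := by
        have := Nat.lt_floor_add_one ((r - (m : ℝ) * t) / d)
        rw [div_lt_iff₀ hd] at this
        rw [hj]
        push_cast
        linarith
      have hj2 : ((j : ℝ) - 1) * d ≤ r - (m : ℝ) * t := by
        have h' : (0:ℝ) ≤ (r - (m : ℝ) * t) / d := div_nonneg (by linarith) hd.le
        have := Nat.floor_le h'
        rw [le_div_iff₀ hd] at this
        rw [hj]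
        push_cast
        linarith
      have hjm : j ≤ m := by
        have hjd : (j : ℝ) * d ≤ r - (m : ℝ) * t + d := by linarith
        have hmtd : r + d < (m : ℝ) * t + (m : ℝ) * d := by nlinarith
        have : (j : ℝ) * d < (m : ℝ) * d := by linarith
        exact_mod_cast le_of_lt ((mul_lt_mul_iff_of_pos_right hd).1 this)
      have hval : ((m - j : ℕ) : ℝ) * t + (j : ℝ) * (t + d) = (m : ℝ) * t + (j : ℝ) * d := by
        rw [Nat.cast_sub hjm]; ring
      refine ⟨(m - j) • t + j • (t + d),
        M.add_mem (M.nsmul_mem ht _) (M.nsmul_mem hs _), ?_, ?_⟩ <;>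
      · rw [nsmul_eq_mul, nsmul_eq_mul, hval]
        linarith

/-- If a liken has two undecomposable elements with irrational ratio,
then its gaps tend to 0. -/
theorem gaps_tendsto_zero (x : ℕ → ℝ) (hx : IsLiken x) (u v : ℝ)
    (hu : Undecomposable x u) (hv : Undecomposable x v)
    (hirr : Irrational (u / v)) :
    Tendsto (fun k : ℕ => x (k + 1) - x k) atTop (nhds 0) := by
  obtain ⟨h0, hmono, hclosed⟩ := hx
  set M : AddSubmonoid ℝ :=
    { carrier := Set.range x
      add_mem' := by
        rintro a b ⟨n, rfl⟩ ⟨m, rfl⟩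
        obtain ⟨k, hk⟩ := hclosed n m
        exact ⟨k, hk.symm⟩
      zero_mem' := ⟨0, h0⟩ } with hM
  have hMx : ∀ w, w ∈ M ↔ w ∈ Set.range x := fun w => Iff.rfl
  have hnonneg : ∀ w ∈ M, (0 : ℝ) ≤ w := by
    rintro w ⟨i, rfl⟩
    rw [← h0]
    exact hmono.monotone (Nat.zero_le i)
  have huM : u ∈ M := hu.1
  have hvM : v ∈ M := hv.1
  have hv0 : v ≠ 0 := by
    rintro rfl
    rw [div_zero] at hirr
    exact hirr ⟨0, by norm_num⟩
  have hu0 : u ≠ 0 := by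
    rintro rfl
    rw [zero_div] at hirr
    exact hirr ⟨0, by norm_num⟩
  have hupos : 0 < u := lt_of_le_of_ne (hnonneg u huM) (Ne.symm hu0)
  -- x tends to infinity
  have hxtop : Tendsto x atTop atTop := by
    apply tendsto_atTop_atTop_of_monotone' hmono.monotone
    rintro ⟨b, hb⟩
    obtain ⟨n, hn⟩ := exists_nat_gt (b / u)
    have hmem : n • u ∈ M := M.nsmul_mem huM n
    have hle : n • u ≤ b := hb hmem
    rw [nsmul_eq_mul] at hle
    rw [div_lt_iff₀ hupos] at hn
    linarith
  -- key: elements with small positive difference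
  have key : ∀ ε : ℝ, 0 < ε → ∃ t d : ℝ, t ∈ M ∧ t + d ∈ M ∧ 0 < d ∧ d < ε := by
    intro ε hε
    rcases AddSubgroup.dense_or_cyclic (AddSubgroup.closure {u, v}) with hdense | ⟨a, ha⟩
    · obtain ⟨g, hg_mem, hg⟩ := hdense.exists_mem_open (isOpen_Ioo (a := (0:ℝ)) (b := ε))
        ⟨ε / 2, Set.mem_Ioo.2 ⟨by linarith, by linarith⟩⟩
      obtain ⟨z1, z2, hz⟩ := (AddSubgroup.mem_closure_pair).1 hg_mem
      refine ⟨(-z1).toNat • u + (-z2).toNat • v, g,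
        M.add_mem (M.nsmul_mem huM _) (M.nsmul_mem hvM _), ?_, hg.1, hg.2⟩
      have hval : (-z1).toNat • u + (-z2).toNat • v + g = z1.toNat • u + z2.toNat • v := by
        rw [← hz]
        simp only [nsmul_eq_mul, zsmul_eq_mul]
        have e1 : ((z1.toNat : ℝ)) - (((-z1).toNat : ℝ)) = (z1 : ℝ) := by
          have := Int.toNat_sub_toNat_neg z1
          exact_mod_cast congrArg (Int.cast : ℤ → ℝ) this
        have e2 : ((z2.toNat : ℝ)) - (((-z2).toNat : ℝ)) = (z2 : ℝ) := by
          have := Int.toNat_sub_toNat_neg z2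
          exact_mod_cast congrArg (Int.cast : ℤ → ℝ) this
        rw [← e1, ← e2]; ring
      rw [hval]
      exact M.add_mem (M.nsmul_mem huM _) (M.nsmul_mem hvM _)
    · exfalso
      have hu_cl : u ∈ AddSubgroup.closure ({u, v} : Set ℝ) :=
        AddSubgroup.subset_closure (by simp)
      have hv_cl : v ∈ AddSubgroup.closure ({u, v} : Set ℝ) :=
        AddSubgroup.subset_closure (by simp)
      rw [ha, AddSubgroup.mem_closure_singleton] at hu_cl hv_cl
      obtain ⟨n, hn⟩ := hu_cl
      obtain ⟨m, hm⟩ := hv_cl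
      have ha0 : a ≠ 0 := by
        rintro rfl
        rw [smul_zero] at hm
        exact hv0 hm.symm
      have hm0 : (m : ℝ) ≠ 0 := by
        rintro hm0
        rw [← hm, zsmul_eq_mul, hm0, zero_mul] at hv0
        exact hv0 rfl
      apply hirr
      refine ⟨(n : ℚ) / (m : ℚ), ?_⟩
      rw [← hn, ← hm, zsmul_eq_mul, zsmul_eq_mul]
      push_cast
      rw [mul_div_mul_right _ _ ha0]
  -- conclude
  rw [Metric.tendsto_atTop]
  intro ε hε
  obtain ⟨t, d, htM, hsM, hd0, hdε⟩ := key ε hε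
  have ht0 : 0 ≤ t := hnonneg t htM
  set C := t * t / d + t with hC
  obtain ⟨N, hN⟩ := (hxtop.eventually (eventually_ge_atTop C)).exists_forall_of_atTop
  refine ⟨N, fun k hk => ?_⟩
  obtain ⟨w, hwM, hw1, hw2⟩ := covering M t d htM hsM ht0 hd0 (x k) (hN k hk)
  obtain ⟨j, rfl⟩ := hwM
  have hkj : k < j := hmono.lt_iff_lt.1 hw1
  have hle : x (k + 1) ≤ x j := hmono.monotone hkj
  have hgap : 0 < x (k + 1) - x k := sub_pos.2 (hmono (Nat.lt_succ_self k))
  rw [Real.dist_eq, sub_zero, abs_of_pos hgap]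
  linarith
end

section
/- The liken ℕ** defined by x n = Real.log (2*n + 1) is convex (2 * x (k+1) > x k + x (k+2) for all k), but it is not isomorphic to the liken ℕ* given by y n = Real.log (n+1): it is not the case that for all i, j, k, x i + x j = x k if and only if (i+1)*(j+1) = k+1 (the equivalence fails, e.g., at i = j = 1). -/
/-- The liken ℕ**: the (logarithms of the) odd natural numbers. -/
noncomputable def NStarStar (n : ℕ) : ℝ := Real.log (2 * (n : ℝ) + 1)

/-- ℕ** is convex but not isomorphic to the liken ℕ*
(given by `n ↦ log (n+1)`). -/
theorem NStarStar_convex_not_isomorphic_to_NStar :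
    (∀ k : ℕ, NStarStar k + NStarStar (k + 2) < 2 * NStarStar (k + 1)) ∧
    ¬ (∀ i j k : ℕ, NStarStar i + NStarStar j = NStarStar k ↔
        (i + 1) * (j + 1) = k + 1) := by
  constructor
  · intro k
    have hk : (0:ℝ) ≤ (k:ℝ) := Nat.cast_nonneg k
    have h1 : NStarStar k + NStarStar (k+2) =
        Real.log ((2*(k:ℝ)+1)*(2*(k:ℝ)+5)) := by
      unfold NStarStar
      push_cast
      rw [Real.log_mul (by nlinarith) (by nlinarith)]
      ring_nf
    have h2 : 2*NStarStar (k+1) = Real.log ((2*(k:ℝ)+3)^2) := by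
      unfold NStarStar
      rw [Real.log_pow]
      push_cast
      ring_nf
    rw [h1, h2]
    exact Real.log_lt_log (by nlinarith) (by nlinarith)
  · intro h
    have := (h 1 1 4).mp ?_
    · omega
    · unfold NStarStar
      push_cast
      rw [← Real.log_mul (by norm_num) (by norm_num)]
      norm_num
end

section
/- The liken ℕ** given by x n = Real.log (2*n+1) does not have the Ockham's razor property. Concretely: the least element of the sub-semigroup generated by {x 1, x 2} = {Real.log 3, Real.log 5} that is strictly greater than x 2 = Real.log 5 is z = Real.log 9 = 2 * Real.log 3; the unique representations of x 2 and z in terms of the undecomposable elements of ℕ** have disjoint supports (x 2 = 1·log 5 and z = 2·log 3, with log 3 and log 5 both undecomposable in ℕ**); yet x 3 = Real.log 7 ≠ z. -/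
lemma aux_prime_factor (p : ℕ) (hp : p.Prime) (a b : ℕ)
    (h : (2 * a + 1) * (2 * b + 1) = p) : 2 * a + 1 = 1 ∨ 2 * b + 1 = 1 := by
  rcases hp.eq_one_or_self_of_dvd (2 * a + 1) ⟨2 * b + 1, h.symm⟩ with h1 | h1
  · left; exact h1
  · right
    rw [h1] at h
    have h2 : p * (2 * b + 1) = p * 1 := by rw [mul_one]; exact h
    exact Nat.eq_of_mul_eq_mul_left hp.pos h2

lemma undec_prime (p : ℕ) (hp : p.Prime) (hodd : Odd p) :
    Undecomposable NStarStar (Real.log p) := by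
  constructor
  · obtain ⟨k, hk⟩ := hodd
    exact ⟨k, by simp [NStarStar]; push_cast [hk]; ring_nf⟩
  · rintro v w ⟨a, rfl⟩ ⟨b, rfl⟩ hvw
    have ha : (0:ℝ) < 2 * (a:ℝ) + 1 := by positivity
    have hb : (0:ℝ) < 2 * (b:ℝ) + 1 := by positivity
    have hlog : Real.log p = Real.log ((2 * (a:ℝ) + 1) * (2 * (b:ℝ) + 1)) := by
      rw [Real.log_mul ha.ne' hb.ne']; exact hvw
    have hpos : (0:ℝ) < p := by exact_mod_cast hp.pos
    have hreal : (p:ℝ) = (2 * (a:ℝ) + 1) * (2 * (b:ℝ) + 1) := by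
      have := congrArg Real.exp hlog
      rwa [Real.exp_log hpos, Real.exp_log (by positivity)] at this
    have hnat : (2 * a + 1) * (2 * b + 1) = p := by exact_mod_cast hreal.symm
    rcases aux_prime_factor p hp a b hnat with h1 | h1
    · left
      have : a = 0 := by omega
      simp [NStarStar, this]
    · right
      have : b = 0 := by omega
      simp [NStarStar, this]

/-- ℕ** fails the Ockham's razor property: the least element of the
sub-semigroup generated by `{log 3, log 5}` exceeding `x 2 = log 5` is
`z = log 9 = 2 * log 3`; `x 2 = log 5` and `z = 2 * log 3` have disjoint
supports (`log 3` and `log 5` are both undecomposable in ℕ**), yet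
`x 3 = log 7 ≠ z`. -/
theorem NStarStar_not_razor :
    IsLeast {t : ℝ | t ∈ AddSubsemigroup.closure
        ({Real.log 3, Real.log 5} : Set ℝ) ∧ Real.log 5 < t} (Real.log 9) ∧
    Real.log 9 = 2 * Real.log 3 ∧
    Undecomposable NStarStar (Real.log 3) ∧
    Undecomposable NStarStar (Real.log 5) ∧
    NStarStar 2 = Real.log 5 ∧
    NStarStar 3 = Real.log 7 ∧
    NStarStar 3 ≠ Real.log 9 := by
  have h3mem : Real.log 3 ∈ AddSubsemigroup.closure ({Real.log 3, Real.log 5} : Set ℝ) :=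
    AddSubsemigroup.subset_closure (by simp)
  have h9 : Real.log 9 = Real.log 3 + Real.log 3 := by
    rw [← Real.log_mul (by norm_num) (by norm_num)]; norm_num
  refine ⟨⟨⟨?_, ?_⟩, ?_⟩, ?_, ?_, ?_, ?_, ?_, ?_⟩
  · rw [h9]; exact AddSubsemigroup.add_mem _ h3mem h3mem
  · exact Real.log_lt_log (by norm_num) (by norm_num)
  · rintro t ⟨htmem, htlt⟩
    have key : ∀ s ∈ AddSubsemigroup.closure ({Real.log 3, Real.log 5} : Set ℝ),
        ∃ n : ℕ, (n = 3 ∨ n = 5 ∨ 9 ≤ n) ∧ s = Real.log n := by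
      intro s hs
      induction hs using AddSubsemigroup.closure_induction with
      | mem x hx =>
        rcases hx with hx | hx
        · exact ⟨3, Or.inl rfl, by rw [hx]; norm_num⟩
        · exact ⟨5, Or.inr (Or.inl rfl), by rw [hx]; norm_num⟩
      | add x y _ _ ihx ihy =>
        obtain ⟨n, hn, rfl⟩ := ihx
        obtain ⟨m, hm, rfl⟩ := ihy
        have hn3 : 3 ≤ n := by omega
        have hm3 : 3 ≤ m := by omega
        refine ⟨n * m, Or.inr (Or.inr (by nlinarith)), ?_⟩
        rw [← Real.log_mul (by exact_mod_cast by omega : (n:ℝ) ≠ 0)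
          (by exact_mod_cast by omega : (m:ℝ) ≠ 0)]
        push_cast; ring_nf
    obtain ⟨n, hn, rfl⟩ := key t htmem
    rcases hn with rfl | rfl | hn
    · exact absurd htlt (by push_cast; exact not_lt.2 (Real.log_le_log (by norm_num) (by norm_num)))
    · exact absurd htlt (by push_cast; exact lt_irrefl _)
    · exact Real.log_le_log (by norm_num) (by exact_mod_cast by omega)
  · rw [h9]; ring
  · exact undec_prime 3 (by norm_num) ⟨1, rfl⟩
  · exact undec_prime 5 (by norm_num) ⟨2, rfl⟩
  · simp [NStarStar]; norm_num
  · simp [NStarStar]; norm_num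
  · have : Real.log 7 < Real.log 9 := Real.log_lt_log (by norm_num) (by norm_num)
    simp only [NStarStar]; norm_num
    exact ne_of_lt this
end

section
/- Let x : ℕ → ℝ be a convex liken whose set of undecomposable elements is infinite, enumerated by the strictly increasing sequence a : ℕ → ℝ (indexed from 1), and suppose x has the uniqueness property with respect to a. Let Φ be the function on positive integers with Φ(m) = ∑ k, v_{p_k}(m) * a k (p_k the k-th prime). Suppose n ≥ 1 and Φ(i) = x (i-1) for all integers i with 1 ≤ i ≤ 2n. If r and s are integers with 1 ≤ r ≤ 2n and 1 ≤ s ≤ 2n such that x (2n-1) < x (r-1) + x (s-1) < x 1 + x n, then r * s = 2n + 1. (The 'box' (x (2n-1), x 1 + x n) contains no element of the sub-liken generated by x 1, ..., x (2n-1) other than possibly Φ(2n+1).) -/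
/-- `Φ(m) = ∑ k, v_{p_k}(m) * a k`: the canonical algebraic morphism from
ℕ* to the liken generated by `a`, sending the `k`-th prime `p_k` to the
`k`-th generator (here `a` is indexed from `0`, so `Φ(2) = a 0`). -/
noncomputable def Phi (a : ℕ → ℝ) (m : ℕ) : ℝ :=
  (Nat.factorization m).sum fun p e => (e : ℝ) * a (Nat.count Nat.Prime p)

lemma Phi_one (a : ℕ → ℝ) : Phi a 1 = 0 := by
  unfold Phi; simp

lemma Phi_mul (a : ℕ → ℝ) {u v : ℕ} (hu : u ≠ 0) (hv : v ≠ 0) :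
    Phi a (u * v) = Phi a u + Phi a v := by
  unfold Phi
  rw [Nat.factorization_mul hu hv]
  apply Finsupp.sum_add_index'
  · intro p; simp
  · intro p e1 e2; push_cast; ring

lemma D_anti (x : ℕ → ℝ) (hconv : ∀ k : ℕ, x k + x (k + 2) < 2 * x (k + 1)) :
    ∀ {p q : ℕ}, p ≤ q → x (q+1) - x q ≤ x (p+1) - x p := by
  have h : StrictAnti (fun k => x (k+1) - x k) :=
    strictAnti_nat_of_succ_lt (fun k => by have := hconv k; show x (k+1+1) - x (k+1) < x (k+1) - x k; linarith)
  intro p q hpq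
  exact h.antitone hpq

lemma blockIneq (x : ℕ → ℝ) (hconv : ∀ k : ℕ, x k + x (k + 2) < 2 * x (k + 1)) :
    ∀ (t i j : ℕ), j ≤ i → x (i+t) - x i ≤ x (j+t) - x j := by
  intro t
  induction t with
  | zero => intro i j _; simp
  | succ t ih =>
      intro i j hji
      have h1 := ih i j hji
      have h2 : x (i+t+1) - x (i+t) ≤ x (j+t+1) - x (j+t) :=
        D_anti x hconv (by omega)
      have e1 : i + (t+1) = i + t + 1 := by omega
      have e2 : j + (t+1) = j + t + 1 := by omega
      rw [e1, e2]
      linarith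

section Helpers

variable (x a : ℕ → ℝ) (n : ℕ)
variable (hmono : StrictMono x)
variable (hconv : ∀ k : ℕ, x k + x (k + 2) < 2 * x (k + 1))
variable (hagree : ∀ i : ℕ, 1 ≤ i → i ≤ 2 * n → Phi a i = x (i - 1))
variable (hn : 1 ≤ n)

include hmono hagree in
lemma phi_mono : ∀ i j : ℕ, 1 ≤ i → i ≤ j → j ≤ 2*n → Phi a i ≤ Phi a j := by
  intro i j h1 hij hj
  rw [hagree i h1 (by omega), hagree j (by omega) hj]
  exact hmono.monotone (by omega)

include hmono hagree in
lemma phi_nonneg : ∀ i : ℕ, 1 ≤ i → i ≤ 2*n → 0 ≤ Phi a i := by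
  intro i h1 h2
  have := phi_mono x a n hmono hagree 1 i le_rfl h1 h2
  rw [Phi_one] at this
  exact this

-- Claim C (sorted): if u ≤ v ≤ 2n and u*v ≥ n+1, then Phi(n+1) ≤ Phi u + Phi v
include hmono hconv hagree hn in
lemma claimC_sorted : ∀ u : ℕ, ∀ v : ℕ, 1 ≤ u → u ≤ v → v ≤ 2*n → n+1 ≤ u*v →
    Phi a (n+1) ≤ Phi a u + Phi a v := by
  intro u
  induction u using Nat.strong_induction_on with
  | _ u IH =>
    intro v h1 huv hv hprod
    by_cases h2n : u*v ≤ 2*n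
    · have e : Phi a (u*v) = Phi a u + Phi a v :=
        Phi_mul a (by omega) (by omega)
      have := phi_mono x a n hmono hagree (n+1) (u*v) (by omega) hprod h2n
      linarith
    · push_neg at h2n
      by_cases hv2 : n+1 ≤ v
      · have h1' := phi_mono x a n hmono hagree (n+1) v (by omega) hv2 hv
        have h2' := phi_nonneg x a n hmono hagree u h1 (by omega)
        linarith
      · push_neg at hv2
        have hvn : v ≤ n := by omega
        have hu2 : 2 ≤ u := by
          by_contra hcon
          push_neg at hcon
          have : u = 1 := by omega
          subst this
          rw [one_mul] at h2n
          omega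
        -- expansion: (u-1)*(v+1) + (v+1) = u*v + u
        have hexp : (u-1)*(v+1) + (v+1) = u*v + u := by
          have h' : (u - 1 + 1) = u := by omega
          calc (u-1)*(v+1) + (v+1) = (u-1+1)*(v+1) := by ring
          _ = u*(v+1) := by rw [h']
          _ = u*v + u := by ring
        have hprod' : n+1 ≤ (u-1)*(v+1) := by omega
        -- rearrangement step: Phi(u-1) + Phi(v+1) ≤ Phi u + Phi v
        have pu : Phi a u = x (u-1) := hagree u (by omega) (by omega)
        have pum : Phi a (u-1) = x (u-1-1) := hagree (u-1) (by omega) (by omega)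
        have pv : Phi a v = x (v-1) := hagree v (by omega) (by omega)
        have pvp : Phi a (v+1) = x (v+1-1) := hagree (v+1) (by omega) (by omega)
        have hD : x (v-1+1) - x (v-1) ≤ x (u-2+1) - x (u-2) :=
          D_anti x hconv (by omega)
        have e1 : v - 1 + 1 = v := by omega
        have e2 : u - 2 + 1 = u - 1 := by omega
        have e3 : u - 1 - 1 = u - 2 := by omega
        have e4 : v + 1 - 1 = v := by omega
        rw [e1, e2] at hD
        have hstep : Phi a (u-1) + Phi a (v+1) ≤ Phi a u + Phi a v := by
          rw [pu, pum, pv, pvp, e3, e4]; linarith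
        have := IH (u-1) (by omega) (v+1) (by omega) (by omega) (by omega) hprod'
        linarith

include hmono hconv hagree hn in
lemma claimC : ∀ u v : ℕ, 1 ≤ u → 1 ≤ v → u ≤ 2*n → v ≤ 2*n → n+1 ≤ u*v →
    Phi a (n+1) ≤ Phi a u + Phi a v := by
  intro u v h1 h2 hu hv hprod
  rcases le_total u v with h | h
  · exact claimC_sorted x a n hmono hconv hagree hn u v h1 h hv hprod
  · have := claimC_sorted x a n hmono hconv hagree hn v u h2 h hu (by rw [mul_comm] at hprod; exact hprod)
    linarith

end Helpers

section Helpers2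

variable (x a : ℕ → ℝ) (n : ℕ)
variable (hmono : StrictMono x)
variable (hconv : ∀ k : ℕ, x k + x (k + 2) < 2 * x (k + 1))
variable (hagree : ∀ i : ℕ, 1 ≤ i → i ≤ 2 * n → Phi a i = x (i - 1))
variable (hn : 1 ≤ n)

include hmono hconv hagree hn in
lemma oddLemma : ∀ u v : ℕ, Odd u → Odd v → 3 ≤ u → u ≤ v → v + 1 ≤ 2*n → u*v ≤ 4*n+1 →
    Phi a 2 + Phi a ((u*v-1)/2) ≤ Phi a u + Phi a v := by
  intro u v hou hov hu3 huv hv2n hub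
  obtain ⟨α, hα⟩ := hou
  obtain ⟨β, hβ⟩ := hov
  have hα1 : 1 ≤ α := by omega
  have hαβ : α ≤ β := by omega
  have hprodExp : u*v = 4*(α*β) + 2*α + 2*β + 1 := by
    subst hα; subst hβ; ring
  have hk : (u*v-1)/2 = 2*(α*β)+α+β := by omega
  rw [hk]
  have hm1 : 1 ≤ α*β := Nat.mul_pos (by omega) (by omega)
  have hk2n : 2*(α*β)+α+β ≤ 2*n := by omega
  have huβ : u*β = 2*(α*β)+β := by subst hα; ring
  have hαv : α*v = 2*(α*β)+α := by subst hβ; ring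
  have hαv1 : α*(v+1) = 2*(α*β)+2*α := by subst hβ; ring
  have p1 : Phi a (u*β) = Phi a u + Phi a β := Phi_mul a (by omega) (by omega)
  have p2 : Phi a (α*v) = Phi a α + Phi a v := Phi_mul a (by omega) (by omega)
  have p3 : Phi a (α*(v+1)) = Phi a α + Phi a (v+1) := Phi_mul a (by omega) (by omega)
  have p4 : Phi a (2*β) = Phi a 2 + Phi a β := Phi_mul a (by omega) (by omega)
  rw [huβ] at p1
  rw [hαv] at p2
  rw [hαv1] at p3
  have q0 : Phi a (2*(α*β)+α+β) = x (2*(α*β)+α+β-1) := hagree _ (by omega) (by omega)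
  have q1 : Phi a (2*(α*β)+β) = x (2*(α*β)+β-1) := hagree _ (by omega) (by omega)
  have q2 : Phi a (2*(α*β)+α) = x (2*(α*β)+α-1) := hagree _ (by omega) (by omega)
  have q3 : Phi a (2*(α*β)+2*α) = x (2*(α*β)+2*α-1) := hagree _ (by omega) (by omega)
  have qv : Phi a v = x (v-1) := hagree v (by omega) (by omega)
  have qv1 : Phi a (v+1) = x (v+1-1) := hagree (v+1) (by omega) (by omega)
  have qvm : Phi a (v-1) = x (v-1-1) := hagree (v-1) (by omega) (by omega)
  have hb : x (2*(α*β)+β-1 + α) - x (2*(α*β)+β-1) ≤ x (2*(α*β)+α-1 + α) - x (2*(α*β)+α-1) :=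
    blockIneq x hconv α _ _ (by omega)
  have e1 : 2*(α*β)+β-1+α = 2*(α*β)+α+β-1 := by omega
  have e2 : 2*(α*β)+α-1+α = 2*(α*β)+2*α-1 := by omega
  rw [e1, e2] at hb
  have hD : x (v-1+1) - x (v-1) ≤ x (v-2+1) - x (v-2) := D_anti x hconv (by omega)
  have e3 : v-1+1 = v := by omega
  have e4 : v-2+1 = v-1 := by omega
  rw [e3, e4] at hD
  have e5 : v - 1 = 2*β := by omega
  have e6 : v+1-1 = v := by omega
  have e7 : v-1-1 = v-2 := by omega
  rw [e6] at qv1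
  rw [e7] at qvm
  have p4' : Phi a (v-1) = Phi a 2 + Phi a β := by rw [e5]; exact p4
  linarith [hb, hD, q0, q1, q2, q3, qv, qv1, qvm, p1, p2, p3, p4']

include hmono hconv hagree hn in
lemma mainSorted : ∀ r s : ℕ, 1 ≤ r → r ≤ s → s ≤ 2*n → 2*n+2 ≤ r*s →
    Phi a 2 + Phi a (n+1) ≤ Phi a r + Phi a s := by
  intro r s hr1 hrs hs2n hprod
  have hr2n : r ≤ 2*n := le_trans hrs hs2n
  have hr2 : 2 ≤ r := by
    by_contra hcon
    push_neg at hcon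
    have : r = 1 := by omega
    subst this
    rw [one_mul] at hprod
    omega
  by_cases hsn : n+1 ≤ s
  · have h1 := phi_mono x a n hmono hagree 2 r (by omega) hr2 hr2n
    have h2 := phi_mono x a n hmono hagree (n+1) s (by omega) hsn hs2n
    linarith
  · push_neg at hsn
    have hsn' : s ≤ n := by omega
    rcases Nat.even_or_odd r with hre | hro
    · -- r even
      obtain ⟨c, hc⟩ := hre
      have hc2 : r = 2*c := by omega
      have hc1 : 1 ≤ c := by omega
      have hcs : 2*(c*s) = r*s := by rw [hc2]; ring
      have hC := claimC x a n hmono hconv hagree hn c s hc1 (by omega) (by omega) hs2n (by omega)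
      have pr : Phi a r = Phi a 2 + Phi a c := by
        rw [hc2]; exact Phi_mul a (by omega) (by omega)
      linarith
    · rcases Nat.even_or_odd s with hse | hso
      · -- s even
        obtain ⟨c, hc⟩ := hse
        have hc2 : s = 2*c := by omega
        have hc1 : 1 ≤ c := by omega
        have hcs : 2*(r*c) = r*s := by rw [hc2]; ring
        have hC := claimC x a n hmono hconv hagree hn r c hr1 hc1 hr2n (by omega) (by omega)
        have ps : Phi a s = Phi a 2 + Phi a c := by
          rw [hc2]; exact Phi_mul a (by omega) (by omega)
        linarith
      · -- both odd : descent
        have hr3 : 3 ≤ r := by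
          obtain ⟨t, ht⟩ := hro; omega
        set j := (r*s - (2*n+2)) / (2*r) with hj
        have hdm0 := Nat.div_add_mod (r*s - (2*n+2)) (2*r)
        have hmlt : (r*s - (2*n+2)) % (2*r) < 2*r := Nat.mod_lt _ (by omega)
        have hdm : 2*(r*j) + (r*s - (2*n+2)) % (2*r) = r*s - (2*n+2) := by
          have h' : 2*(r*j) = 2*r*j := by ring
          rw [h', hj]
          exact hdm0
        have hrj : r*(2*j) ≤ r*s := by
          have h' : r*(2*j) = 2*(r*j) := by ring
          omega
        have h2js : 2*j ≤ s := Nat.le_of_mul_le_mul_left hrj (by omega)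
        set s' := s - 2*j with hs'
        have hexp : r*s' + 2*(r*j) = r*s := by
          have h' : s' + 2*j = s := by omega
          calc r*s' + 2*(r*j) = r*(s' + 2*j) := by ring
          _ = r*s := by rw [h']
        have hge : 2*n+2 ≤ r*s' := by omega
        have hle : r*s' ≤ 2*n+1+2*r := by omega
        have hso' : Odd s' := by
          obtain ⟨t, ht⟩ := hso; exact ⟨t - j, by omega⟩
        have hodd : Odd (r*s') := hro.mul hso'
        have hge3 : 2*n+3 ≤ r*s' := by
          obtain ⟨w, hw⟩ := hodd; omega
        have hs'1 : 1 ≤ s' := by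
          by_contra hcon
          push_neg at hcon
          have : s' = 0 := by omega
          rw [this, mul_zero] at hge3; omega
        have hs'3 : 3 ≤ s' := by
          by_contra hcon
          push_neg at hcon
          have : s' = 1 := by
            obtain ⟨t, ht⟩ := hso'; omega
          rw [this, mul_one] at hge3; omega
        have hub : r*s' ≤ 4*n+1 := by omega
        have hPs' : Phi a s' ≤ Phi a s :=
          phi_mono x a n hmono hagree s' s hs'1 (by omega) hs2n
        have hkub : (r*s'-1)/2 ≤ 2*n := by
          obtain ⟨w, hw⟩ := hodd; omega
        have hklb : n+1 ≤ (r*s'-1)/2 := by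
          obtain ⟨w, hw⟩ := hodd; omega
        have hPk : Phi a (n+1) ≤ Phi a ((r*s'-1)/2) :=
          phi_mono x a n hmono hagree (n+1) _ (by omega) hklb hkub
        rcases le_total r s' with hsort | hsort
        · have hOL := oddLemma x a n hmono hconv hagree hn r s' hro hso' hr3 hsort
            (by omega) hub
          linarith
        · have hcomm : s' * r = r * s' := by ring
          have hOL := oddLemma x a n hmono hconv hagree hn s' r hso' hro hs'3 hsort
            (by omega) (by rw [hcomm]; exact hub)
          rw [hcomm] at hOL
          linarith

include hmono hconv hagree hn in
lemma mainIneq : ∀ r s : ℕ, 1 ≤ r → 1 ≤ s → r ≤ 2*n → s ≤ 2*n → 2*n+2 ≤ r*s →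
    Phi a 2 + Phi a (n+1) ≤ Phi a r + Phi a s := by
  intro r s hr1 hs1 hr2 hs2 hprod
  rcases le_total r s with h | h
  · exact mainSorted x a n hmono hconv hagree hn r s hr1 h hs2 hprod
  · have := mainSorted x a n hmono hconv hagree hn s r hs1 h hr2
      (by rw [mul_comm s r]; exact hprod)
    linarith

end Helpers2


/-- The "box" `(x (2n-1), x 1 + x n)` contains no element
`x (r-1) + x (s-1)` (`1 ≤ r, s ≤ 2n`) of the sub-liken generated by
`x 1, ..., x (2n-1)` other than possibly `Φ(2n+1)`, i.e. with `r * s = 2n+1`. -/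
theorem box_contains_only_phi (x a : ℕ → ℝ)
    (hx : IsLiken x)
    (hconv : ∀ k : ℕ, x k + x (k + 2) < 2 * x (k + 1))
    (ha_mono : StrictMono a)
    (ha_range : Set.range a = {u : ℝ | Undecomposable x u})
    (huniq : ∀ n : ℕ, ∃! m : ℕ →₀ ℕ, x n = comb a m)
    (n : ℕ) (hn : 1 ≤ n)
    (hagree : ∀ i : ℕ, 1 ≤ i → i ≤ 2 * n → Phi a i = x (i - 1))
    (r s : ℕ) (hr1 : 1 ≤ r) (hr2 : r ≤ 2 * n) (hs1 : 1 ≤ s) (hs2 : s ≤ 2 * n)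
    (hlow : x (2 * n - 1) < x (r - 1) + x (s - 1))
    (hhigh : x (r - 1) + x (s - 1) < x 1 + x n) :
    r * s = 2 * n + 1 := by
  obtain ⟨hx0, hxmono, hclose⟩ := hx
  have hr0 : r ≠ 0 := by omega
  have hs0 : s ≠ 0 := by omega
  have hPhi_rs : Phi a (r*s) = x (r-1) + x (s-1) := by
    rw [Phi_mul a hr0 hs0, hagree r hr1 hr2, hagree s hs1 hs2]
  rcases Nat.lt_or_ge (r*s) (2*n+1) with hlt | hge
  · -- r*s ≤ 2n : contradiction with hlow
    exfalso
    have h1 : 1 ≤ r*s := Nat.mul_pos (by omega) (by omega)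
    have h2 : r*s ≤ 2*n := by omega
    have hag := hagree (r*s) h1 h2
    have hx' : x (r*s - 1) = x (r-1) + x (s-1) := by rw [← hag, hPhi_rs]
    have hxx : x (2*n-1) < x (r*s-1) := by rw [hx']; exact hlow
    have hlt' : 2*n-1 < r*s-1 := hxmono.lt_iff_lt.mp hxx
    omega
  rcases Nat.lt_or_ge (2*n+1) (r*s) with hgt | hle
  · exfalso
    have hmain := mainIneq x a n hxmono hconv hagree hn r s hr1 hs1 hr2 hs2 (by omega)
    have e2 : Phi a 2 = x 1 := by
      have h := hagree 2 (by omega) (by omega); simpa using h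
    have en : Phi a (n+1) = x n := by
      have h := hagree (n+1) (by omega) (by omega); simpa using h
    have hrs2 : Phi a r + Phi a s = x (r-1) + x (s-1) := by
      rw [hagree r hr1 hr2, hagree s hs1 hs2]
    rw [e2, en, hrs2] at hmain
    linarith
  omega
end

section
/- The liken ℕ* given by x n = Real.log (n+1) is convex (2 * Real.log (k+2) > Real.log (k+1) + Real.log (k+3) for all k ≥ 0) and has the Ockham's razor property. The razor property is equivalent to the following arithmetic statement: for every integer m ≥ 2, if z is the least integer greater than m all of whose prime factors are at most m (the least m-smooth integer exceeding m), and gcd(z, m) = 1, then z = m + 1. -/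
/-- The liken ℕ* (`n ↦ log (n+1)`) is convex, and it has the Ockham's razor
property, which for ℕ* is equivalent to the following arithmetic statement:
for every integer `m ≥ 2`, if `z` is the least `m`-smooth integer exceeding `m`
and `gcd(z, m) = 1`, then `z = m + 1`. -/
theorem NStar_convex_and_razor :
    (∀ k : ℕ, Real.log ((k : ℝ) + 1) + Real.log ((k : ℝ) + 3) <
      2 * Real.log ((k : ℝ) + 2)) ∧
    (∀ m z : ℕ, 2 ≤ m →
      IsLeast {t : ℕ | m < t ∧ ∀ p : ℕ, p.Prime → p ∣ t → p ≤ m} z →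
      Nat.gcd z m = 1 → z = m + 1) := by
  constructor
  · intro k
    have h1 : (0:ℝ) < (k:ℝ) + 1 := by positivity
    have h2 : (0:ℝ) < (k:ℝ) + 2 := by positivity
    have h3 : (0:ℝ) < (k:ℝ) + 3 := by positivity
    rw [← Real.log_mul (ne_of_gt h1) (ne_of_gt h3), two_mul,
      ← Real.log_mul (ne_of_gt h2) (ne_of_gt h2)]
    apply Real.log_lt_log (by positivity)
    nlinarith
  · intro m z hm hz hgcd
    obtain ⟨⟨hz1, hz2⟩, hmin⟩ := hz
    by_cases h1 : ∀ p : ℕ, p.Prime → p ∣ m + 1 → p ≤ m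
    · have := hmin ⟨Nat.lt_succ_self m, h1⟩
      omega
    · push_neg at h1
      obtain ⟨p, hp, hpd, hpm⟩ := h1
      have hpe : p = m + 1 := by
        have := Nat.le_of_dvd (by omega) hpd
        omega
      have hp1 : (m + 1).Prime := hpe ▸ hp
      -- m + 1 is an odd prime, so m is even
      have hne2 : m + 1 ≠ 2 := by omega
      have hodd : Odd (m + 1) := hp1.odd_of_ne_two hne2
      have hmeven : 2 ∣ m := by
        obtain ⟨j, hj⟩ := hodd
        omega
      -- m + 2 is m-smooth
      have hmem : m + 2 ∈ {t : ℕ | m < t ∧ ∀ q : ℕ, q.Prime → q ∣ t → q ≤ m} := by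
        refine ⟨by omega, fun q hq hqd => ?_⟩
        have hq2 : q ≤ m + 2 := Nat.le_of_dvd (by omega) hqd
        have hqne1 : q ≠ m + 1 := by
          intro h
          subst h
          have : (m+1) ∣ (m+2) - (m+1) := Nat.dvd_sub hqd dvd_rfl
          simp at this
          omega
        have hqne2 : q ≠ m + 2 := by
          intro h
          have h2d : 2 ∣ m + 2 := by omega
          rcases (Nat.Prime.eq_one_or_self_of_dvd hq 2 (h ▸ h2d)) with h' | h'
          · omega
          · omega
        omega
      have hzle : z ≤ m + 2 := hmin hmem
      have hzne : z ≠ m + 1 := by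
        intro h
        have := hz2 (m+1) hp1 (h ▸ dvd_rfl)
        omega
      have hze : z = m + 2 := by omega
      have h2z : 2 ∣ z := by rw [hze]; omega
      have : 2 ∣ Nat.gcd z m := Nat.dvd_gcd h2z hmeven
      omega
end
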